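/- Let A = (Q, Σ, δ, γ) be a synchronizing WFA with γ(a) ≤ k for all a ∈ Σ, and let P ⊆ Q be a nonempty subset of states. Then there exists a word w with |δ(P, w)| = 1 (where δ(P, w) = {δ(p, w) : p ∈ P}) and γ(w) ≤ (|P| - 1) · k · C(|Q|, 2). -/

import Mathlib

/-- Transition function extended to words. -/
def deltaStar {Q A : Type*} (δ : Q → A → Q) (q : Q) (w : List A) : Q :=
  w.foldl δ q

/-- Additive weight of a word. -/
def wordWeight {A : Type*} (γ : A → ℕ) (w : List A) : ℕ :=
  (w.map γ).sum

/-- Image of a set of states under a word. -/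
def setImage {Q A : Type*} [DecidableEq Q] (δ : Q → A → Q) (P : Finset Q) (w : List A) : Finset Q :=
  P.image (fun q => deltaStar δ q w)

/-!
A shortest word merging two states `p ≠ q` passes through pairwise distinct unordered pairs
`{p·u, q·u}` of distinct states, one for each proper prefix `u`; a repeated pair could be cut out.
So it has length at most `C(|Q|, 2)` and weight at most `k · C(|Q|, 2)`. Applying such a word to
`P` merges two of its states, and `|P| - 1` rounds of this bring `P` down to a single state.
-/

section Words

variable {Q A : Type*} (δ : Q → A → Q)

lemma deltaStar_append (q : Q) (u v : List A) :
    deltaStar δ q (u ++ v) = deltaStar δ (deltaStar δ q u) v :=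
  List.foldl_append

lemma setImage_nil [DecidableEq Q] (P : Finset Q) : setImage δ P [] = P := by
  simp [setImage, deltaStar]

lemma setImage_append [DecidableEq Q] (P : Finset Q) (u v : List A) :
    setImage δ P (u ++ v) = setImage δ (setImage δ P u) v := by
  simp [setImage, deltaStar_append, Finset.image_image, Function.comp_def]

lemma card_setImage_lt_of_merge [DecidableEq Q] {P : Finset Q} {p q : Q} (hp : p ∈ P)
    (hq : q ∈ P) (hpq : p ≠ q) {w : List A} (hw : deltaStar δ p w = deltaStar δ q w) :
    (setImage δ P w).card < P.card :=
  lt_of_le_of_ne Finset.card_image_le fun h => hpq (Finset.card_image_iff.mp h hp hq hw)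

lemma wordWeight_append (γ : A → ℕ) (u v : List A) :
    wordWeight γ (u ++ v) = wordWeight γ u + wordWeight γ v := by
  simp [wordWeight]

lemma wordWeight_le_mul_length (γ : A → ℕ) {k : ℕ} (hk : ∀ a : A, γ a ≤ k) (w : List A) :
    wordWeight γ w ≤ k * w.length := by
  induction w with
  | nil => simp [wordWeight]
  | cons a w ih =>
    simp only [wordWeight, List.map_cons, List.sum_cons, List.length_cons] at ih ⊢
    rw [mul_add_one, add_comm (k * _)]
    exact add_le_add (hk a) ih

end Words

section PairMerging

variable {Q A : Type*} [Fintype Q] (δ : Q → A → Q)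

lemma exists_shorter_merging_word {p q : Q} {w : List A}
    (hw : deltaStar δ p w = deltaStar δ q w) (hlen : (Fintype.card Q).choose 2 < w.length) :
    ∃ w' : List A, w'.length < w.length ∧ deltaStar δ p w' = deltaStar δ q w' := by
  classical
  by_cases hprefix : ∃ i < w.length, deltaStar δ p (w.take i) = deltaStar δ q (w.take i)
  · obtain ⟨i, hi, hmerge⟩ := hprefix
    exact ⟨w.take i, by simpa using hi, hmerge⟩
  push Not at hprefix
  let pairAt : Fin w.length → {z : Sym2 Q // ¬ z.IsDiag} := fun i =>
    ⟨s(deltaStar δ p (w.take i), deltaStar δ q (w.take i)),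
      Sym2.mk_isDiag_iff.not.mpr (hprefix i i.isLt)⟩
  have hcard : Fintype.card {z : Sym2 Q // ¬ z.IsDiag} < Fintype.card (Fin w.length) := by
    rwa [Sym2.card_subtype_not_diag, Fintype.card_fin]
  obtain ⟨i, j, hij, hpair⟩ := Fintype.exists_ne_map_eq_of_card_lt pairAt hcard
  wlog hlt : (i : ℕ) < j generalizing i j
  · exact this j i hij.symm hpair.symm (by omega)
  refine ⟨w.take i ++ w.drop j, by simp; omega, ?_⟩
  have hsuffix : deltaStar δ (deltaStar δ p (w.take j)) (w.drop j)
      = deltaStar δ (deltaStar δ q (w.take j)) (w.drop j) := by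
    rwa [← deltaStar_append, ← deltaStar_append, List.take_append_drop]
  rw [deltaStar_append, deltaStar_append]
  rcases Sym2.eq_iff.mp (congrArg Subtype.val hpair) with ⟨hp, hq⟩ | ⟨hp, hq⟩
  · rwa [hp, hq]
  · rw [hp, hq]; exact hsuffix.symm

lemma exists_merging_word_length_le_choose {p q : Q} {w : List A}
    (hw : deltaStar δ p w = deltaStar δ q w) :
    ∃ w' : List A, deltaStar δ p w' = deltaStar δ q w' ∧
      w'.length ≤ (Fintype.card Q).choose 2 := by
  induction hn : w.length using Nat.strong_induction_on generalizing w with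
  | _ n ih =>
    by_cases hlen : w.length ≤ (Fintype.card Q).choose 2
    · exact ⟨w, hw, hlen⟩
    obtain ⟨w', hw'len, hw'⟩ := exists_shorter_merging_word δ hw (by omega)
    exact ih _ (hn ▸ hw'len) hw' rfl

end PairMerging

lemma exists_setImage_card_eq_one_of_forall_merge {Q A : Type*} [DecidableEq Q]
    (δ : Q → A → Q) (γ : A → ℕ) (W : ℕ)
    (hmerge : ∀ p q : Q, ∃ w : List A, deltaStar δ p w = deltaStar δ q w ∧ wordWeight γ w ≤ W)
    (P : Finset Q) (hP : P.Nonempty) :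
    ∃ w : List A, (setImage δ P w).card = 1 ∧ wordWeight γ w ≤ (P.card - 1) * W := by
  induction hn : P.card using Nat.strong_induction_on generalizing P with
  | _ n ih =>
    have hpos := hP.card_pos
    by_cases hsingle : P.card = 1
    · exact ⟨[], by rwa [setImage_nil], by simp [wordWeight]⟩
    obtain ⟨p, hp, q, hq, hpq⟩ := Finset.one_lt_card.mp (show 1 < P.card by omega)
    obtain ⟨u, hu, hu_weight⟩ := hmerge p q
    have hlt := card_setImage_lt_of_merge δ hp hq hpq hu
    have hpos' : 0 < (setImage δ P u).card := (hP.image _).card_pos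
    obtain ⟨v, hv, hv_weight⟩ := ih _ (hn ▸ hlt) (setImage δ P u) (hP.image _) rfl
    refine ⟨u ++ v, by rwa [setImage_append], ?_⟩
    calc wordWeight γ (u ++ v) ≤ W + ((setImage δ P u).card - 1) * W := by
          rw [wordWeight_append]; exact add_le_add hu_weight hv_weight
      _ = (setImage δ P u).card * W := by
          rw [add_comm, ← Nat.succ_mul, Nat.succ_eq_add_one, Nat.sub_add_cancel hpos']
      _ ≤ (n - 1) * W := Nat.mul_le_mul_right _ (by omega)

theorem subset_merge_light_general {Q A : Type*} [Fintype Q] [DecidableEq Q]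
    (δ : Q → A → Q) (γ : A → ℕ) (k : ℕ) (hk : ∀ a : A, γ a ≤ k)
    (hsync : ∃ (w : List A) (qbar : Q), ∀ p : Q, deltaStar δ p w = qbar)
    (P : Finset Q) (hP : P.Nonempty) :
    ∃ w : List A, (setImage δ P w).card = 1 ∧
      wordWeight γ w ≤ (P.card - 1) * k * (Fintype.card Q).choose 2 := by
  obtain ⟨wsync, qbar, hwsync⟩ := hsync
  have hmerge : ∀ p q : Q, ∃ w : List A, deltaStar δ p w = deltaStar δ q w ∧
      wordWeight γ w ≤ k * (Fintype.card Q).choose 2 := by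
    intro p q
    obtain ⟨w, hw, hlen⟩ := exists_merging_word_length_le_choose δ
      (show deltaStar δ p wsync = deltaStar δ q wsync by rw [hwsync p, hwsync q])
    exact ⟨w, hw, (wordWeight_le_mul_length γ hk w).trans (Nat.mul_le_mul_left k hlen)⟩
  rw [mul_assoc]
  exact exists_setImage_card_eq_one_of_forall_merge δ γ _ hmerge P hP

theorem subset_merge_light {Q A : Type*} [Fintype Q] [DecidableEq Q] [Nonempty Q]
    (δ : Q → A → Q) (γ : A → ℕ) (k : ℕ) (hk : ∀ a : A, γ a ≤ k)
    (hsync : ∃ (w : List A) (qbar : Q), ∀ p : Q, deltaStar δ p w = qbar)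
    (P : Finset Q) (hP : P.Nonempty) :
    ∃ w : List A, (setImage δ P w).card = 1 ∧
      wordWeight γ w ≤ (P.card - 1) * k * (Fintype.card Q).choose 2 :=
  subset_merge_light_general δ γ k hk hsync P hP
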